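/- arXiv:2209.09228 — 3 statements merged into one kernel-verified Lean document; each statement's English description precedes it below -/
import Mathlib

section
/- Let V:ℝ²→ℝ² be continuous and ℤ²-periodic, d > 0, and g ∈ UC(ℝ²). There exists a constant C depending only on d and max_{ℝ²}|V| such that for every step size τ ∈ (0,1] and every N ∈ ℕ with t = Nτ² ∈ (0,1], the game value satisfies min_{|y−x|≤C√t} g(y) ≤ u_τ(x, Nτ²) ≤ max_{|y−x|≤C√t} g(y) for every x ∈ ℝ². -/
noncomputable section

/-- `ℝⁿ` with the Euclidean norm. -/
abbrev En (n : ℕ) := EuclideanSpace ℝ (Fin n)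

/-- Trace of a (continuous bilinear) form on `ℝⁿ`, w.r.t. the standard basis. -/
def bilTrace {n : ℕ} (B : En n →L[ℝ] En n →L[ℝ] ℝ) : ℝ :=
  ∑ i : Fin n, B (EuclideanSpace.single i 1) (EuclideanSpace.single i 1)

/-- `F(X,p) = (|p| − d (tr X − p·Xp/|p|²))₊`. -/
def Fcurv {n : ℕ} (d : ℝ) (B : En n →L[ℝ] En n →L[ℝ] ℝ) (p : En n) : ℝ :=
  max (‖p‖ - d * (bilTrace B - B p p / ‖p‖ ^ 2)) 0

open Classical in
/-- `F̲(X,p)`: lower semicontinuous envelope, equal to `0` at `p = 0`. -/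
def Funder {n : ℕ} (d : ℝ) (B : En n →L[ℝ] En n →L[ℝ] ℝ) (p : En n) : ℝ :=
  if p = 0 then 0 else Fcurv d B p

open Classical in
/-- `F̄(X,p)`: upper semicontinuous envelope, equal to `2dn‖X‖` at `p = 0`. -/
def Fover {n : ℕ} (d : ℝ) (B : En n →L[ℝ] En n →L[ℝ] ℝ) (p : En n) : ℝ :=
  if p = 0 then 2 * d * n * ‖B‖ else Fcurv d B p

/-- Spatial gradient of a test function `φ(x,t)`. -/
def spaceGrad {n : ℕ} (φ : En n × ℝ → ℝ) (x : En n) (t : ℝ) : En n :=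
  gradient (fun y => φ (y, t)) x

/-- Spatial Hessian (as a bilinear form) of a test function `φ(x,t)`. -/
def spaceHess {n : ℕ} (φ : En n × ℝ → ℝ) (x : En n) (t : ℝ) :
    En n →L[ℝ] En n →L[ℝ] ℝ :=
  fderiv ℝ (fun y => fderiv ℝ (fun z => φ (z, t)) y) x

/-- Hessian (as a bilinear form) of `φ : ℝⁿ → ℝ`. -/
def hess {n : ℕ} (φ : En n → ℝ) (x : En n) : En n →L[ℝ] En n →L[ℝ] ℝ :=
  fderiv ℝ (fderiv ℝ φ) x

/-- Viscosity subsolution of `G_t + (1 − d div(DG/|DG|))₊|DG| + V·DG = 0` on `ℝⁿ × (0,∞)`. -/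
def IsGSubsolution {n : ℕ} (d : ℝ) (V : En n → En n) (G : En n → ℝ → ℝ) : Prop :=
  ∀ φ : En n × ℝ → ℝ, ContDiff ℝ 2 φ → ∀ (x₀ : En n) (t₀ : ℝ), 0 < t₀ →
    (∀ x t, 0 < t → G x t - φ (x, t) ≤ G x₀ t₀ - φ (x₀, t₀)) →
    deriv (fun s => φ (x₀, s)) t₀ +
      Funder d (spaceHess φ x₀ t₀) (spaceGrad φ x₀ t₀) +
      (inner ℝ (V x₀) (spaceGrad φ x₀ t₀) : ℝ) ≤ 0

/-- Viscosity supersolution of the curvature G-equation on `ℝⁿ × (0,∞)`. -/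
def IsGSupersolution {n : ℕ} (d : ℝ) (V : En n → En n) (G : En n → ℝ → ℝ) : Prop :=
  ∀ φ : En n × ℝ → ℝ, ContDiff ℝ 2 φ → ∀ (x₀ : En n) (t₀ : ℝ), 0 < t₀ →
    (∀ x t, 0 < t → G x₀ t₀ - φ (x₀, t₀) ≤ G x t - φ (x, t)) →
    deriv (fun s => φ (x₀, s)) t₀ +
      Fover d (spaceHess φ x₀ t₀) (spaceGrad φ x₀ t₀) +
      (inner ℝ (V x₀) (spaceGrad φ x₀ t₀) : ℝ) ≥ 0

/-- Viscosity solution of the curvature G-equation with initial data `g`: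
continuous on `ℝⁿ × [0,∞)`, both sub- and supersolution, attaining the
initial data uniformly as `t → 0`. -/
def IsGSolution {n : ℕ} (d : ℝ) (V : En n → En n) (g : En n → ℝ)
    (G : En n → ℝ → ℝ) : Prop :=
  ContinuousOn (fun q : En n × ℝ => G q.1 q.2) {q | 0 ≤ q.2} ∧
  IsGSubsolution d V G ∧ IsGSupersolution d V G ∧
  (∀ x, G x 0 = g x) ∧
  TendstoUniformly (fun t x => G x t) g (nhdsWithin (0 : ℝ) (Set.Ioi 0))

/-- `ℤⁿ`-periodicity. -/
def ZPeriodic {n : ℕ} {α : Type*} (f : En n → α) : Prop :=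
  ∀ (k : Fin n → ℤ) (x : En n),
    f (x + (WithLp.equiv 2 (Fin n → ℝ)).symm (fun i => (k i : ℝ))) = f x

/-- Viscosity subsolution of `(1 − d div(Du/|Du|))₊|Du| + V·Du = α` on `Ω`. -/
def IsStatSubsolutionOn {n : ℕ} (d : ℝ) (V : En n → En n) (α : ℝ)
    (Ω : Set (En n)) (u : En n → ℝ) : Prop :=
  ∀ φ : En n → ℝ, ContDiff ℝ 2 φ → ∀ x₀ ∈ Ω,
    (∀ x ∈ Ω, u x - φ x ≤ u x₀ - φ x₀) →
    Funder d (hess φ x₀) (gradient φ x₀) + (inner ℝ (V x₀) (gradient φ x₀) : ℝ) ≤ α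

/-- Viscosity supersolution of `(1 − d div(Du/|Du|))₊|Du| + V·Du = α` on `Ω`. -/
def IsStatSupersolutionOn {n : ℕ} (d : ℝ) (V : En n → En n) (α : ℝ)
    (Ω : Set (En n)) (u : En n → ℝ) : Prop :=
  ∀ φ : En n → ℝ, ContDiff ℝ 2 φ → ∀ x₀ ∈ Ω,
    (∀ x ∈ Ω, u x₀ - φ x₀ ≤ u x - φ x) →
    Fover d (hess φ x₀) (gradient φ x₀) + (inner ℝ (V x₀) (gradient φ x₀) : ℝ) ≥ α

/-- Viscosity subsolution of the discounted cell problem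
`λv + (1 − d div((p+Dv)/|p+Dv|))₊|p+Dv| + V·(p+Dv) = 0` on `ℝⁿ`. -/
def IsCellSubsolution {n : ℕ} (d : ℝ) (V : En n → En n) (p : En n) (lam : ℝ)
    (v : En n → ℝ) : Prop :=
  ∀ φ : En n → ℝ, ContDiff ℝ 2 φ → ∀ x₀ : En n,
    (∀ x, v x - φ x ≤ v x₀ - φ x₀) →
    lam * v x₀ + Funder d (hess φ x₀) (p + gradient φ x₀) +
      (inner ℝ (V x₀) (p + gradient φ x₀) : ℝ) ≤ 0

/-- Viscosity supersolution of the discounted cell problem. -/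
def IsCellSupersolution {n : ℕ} (d : ℝ) (V : En n → En n) (p : En n) (lam : ℝ)
    (v : En n → ℝ) : Prop :=
  ∀ φ : En n → ℝ, ContDiff ℝ 2 φ → ∀ x₀ : En n,
    (∀ x, v x₀ - φ x₀ ≤ v x - φ x) →
    lam * v x₀ + Fover d (hess φ x₀) (p + gradient φ x₀) +
      (inner ℝ (V x₀) (p + gradient φ x₀) : ℝ) ≥ 0

/-- Viscosity solution of the discounted cell problem. -/
def IsCellSolution {n : ℕ} (d : ℝ) (V : En n → En n) (p : En n) (lam : ℝ)
    (v : En n → ℝ) : Prop :=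
  IsCellSubsolution d V p lam v ∧ IsCellSupersolution d V p lam v

/-- Viscosity subsolution of the ergodic (cell) equation
`(1 − d div((p+Dv)/|p+Dv|))₊|p+Dv| + V·(p+Dv) = c` on `ℝⁿ`. -/
def IsErgodicSubsolution {n : ℕ} (d : ℝ) (V : En n → En n) (p : En n) (c : ℝ)
    (w : En n → ℝ) : Prop :=
  ∀ φ : En n → ℝ, ContDiff ℝ 2 φ → ∀ x₀ : En n,
    (∀ x, w x - φ x ≤ w x₀ - φ x₀) →
    Funder d (hess φ x₀) (p + gradient φ x₀) +
      (inner ℝ (V x₀) (p + gradient φ x₀) : ℝ) ≤ c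

/-- Viscosity supersolution of the ergodic (cell) equation. -/
def IsErgodicSupersolution {n : ℕ} (d : ℝ) (V : En n → En n) (p : En n) (c : ℝ)
    (w : En n → ℝ) : Prop :=
  ∀ φ : En n → ℝ, ContDiff ℝ 2 φ → ∀ x₀ : En n,
    (∀ x, w x₀ - φ x₀ ≤ w x - φ x) →
    Fover d (hess φ x₀) (p + gradient φ x₀) +
      (inner ℝ (V x₀) (p + gradient φ x₀) : ℝ) ≥ c

/-- The vector `(a, b) ∈ ℝ²`. -/
def vec2 (a b : ℝ) : En 2 := WithLp.toLp 2 ((![a, b]) : Fin 2 → ℝ)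

/-- The stream function `H(x₁,x₂) = sin x₁ sin x₂`. -/
def cellH (x : En 2) : ℝ := Real.sin (x 0) * Real.sin (x 1)

/-- The cellular flow `V = A (DH)^⊥ = A(−cos x₂ sin x₁, cos x₁ sin x₂)`. -/
def cellV (A : ℝ) (x : En 2) : En 2 :=
  vec2 (-(A * Real.cos (x 1) * Real.sin (x 0))) (A * Real.cos (x 0) * Real.sin (x 1))

/-- `(a,c)^⊥ = (−c,a)`. -/
def perp2 (v : En 2) : En 2 := vec2 (-(v 1)) (v 0)

/-- One step of the Kohn–Serfaty game:
`x ↦ x + τ√(2d) b η + τ²|η| η^⊥ − τ² V(x)`. -/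
def gameStep (V : En 2 → En 2) (d τ : ℝ) (x η : En 2) (b : ℝ) : En 2 :=
  x + (τ * Real.sqrt (2 * d) * b) • η + (τ ^ 2 * ‖η‖) • perp2 η - τ ^ 2 • V x

/-- A game history: the list of pairs `(ηᵢ, bᵢ)` played so far. -/
abbrev GameHist := List (En 2 × ℝ)

/-- A strategy for player I: the next direction `η` as a function of the history. -/
abbrev StrategyI := GameHist → En 2

/-- A strategy for player II: the next sign `b` as a function of the history
and of player I's current choice `η`. -/
abbrev StrategyII := GameHist → En 2 → ℝ

/-- The history and position of the game after `n` steps. -/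
def gameState (V : En 2 → En 2) (d τ : ℝ) (x₀ : En 2)
    (σI : StrategyI) (σII : StrategyII) : ℕ → GameHist × En 2
  | 0 => ([], x₀)
  | n + 1 =>
      let s := gameState V d τ x₀ σI σII n
      let η := σI s.1
      let b := σII s.1 η
      (s.1 ++ [(η, b)], gameStep V d τ s.2 η b)

/-- The game trajectory: position after `k` steps. -/
def gameTraj (V : En 2 → En 2) (d τ : ℝ) (x₀ : En 2)
    (σI : StrategyI) (σII : StrategyII) (k : ℕ) : En 2 :=
  (gameState V d τ x₀ σI σII k).2

/-- Player I must choose directions in the closed unit ball. -/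
def ValidI (σI : StrategyI) : Prop := ∀ h, ‖σI h‖ ≤ 1

/-- Player II must choose signs in `{−1, 1}`. -/
def ValidII (σII : StrategyII) : Prop := ∀ h η, σII h η = 1 ∨ σII h η = -1

/-- `S` is reachable from `x` within time `T`: for every open `U ⊇ S` there are
step sizes `τ_m` and numbers of steps `N_m → ∞` with `N_m τ_m² ≤ T` such that,
for each `m`, player I has a strategy forcing the game trajectory starting at
`x` to satisfy `x_{N_m} ∈ U` regardless of player II's choices. -/
def ReachableWithin (V : En 2 → En 2) (d : ℝ) (x : En 2) (S : Set (En 2)) (T : ℝ) : Prop :=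
  ∀ U : Set (En 2), IsOpen U → S ⊆ U →
    ∃ (τm : ℕ → ℝ) (Nm : ℕ → ℕ),
      (∀ m, 0 < τm m) ∧
      Filter.Tendsto Nm Filter.atTop Filter.atTop ∧
      (∀ m, (Nm m : ℝ) * τm m ^ 2 ≤ T) ∧
      (∀ m, ∃ σI : StrategyI, ValidI σI ∧
        ∀ σII : StrategyII, ValidII σII → gameTraj V d (τm m) x σI σII (Nm m) ∈ U)

/-- The value `u_τ(x, kτ²)` of the Kohn–Serfaty game with terminal cost `g`. -/
def gameValue (V : En 2 → En 2) (d τ : ℝ) (g : En 2 → ℝ) : ℕ → En 2 → ℝ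
  | 0, x => g x
  | k + 1, x => ⨅ η : Metric.closedBall (0 : En 2) 1,
      max (gameValue V d τ g k (gameStep V d τ x (η : En 2) 1))
          (gameValue V d τ g k (gameStep V d τ x (η : En 2) (-1)))

/-- The cell `Q = [0,π]²`. -/
def Qcell : Set (En 2) := {x | x 0 ∈ Set.Icc 0 Real.pi ∧ x 1 ∈ Set.Icc 0 Real.pi}

/-- `Q_μ = {x ∈ Q : H(x) > μ}`. -/
def Qmu (μ : ℝ) : Set (En 2) := {x ∈ Qcell | μ < cellH x}

/-- `Γ_μ = {x : min(|x₁|, |x₂|, |x₁−π|, |x₂−π|) < μ}`. -/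
def Gammamu (μ : ℝ) : Set (En 2) :=
  {x | min (min |x 0| |x 1|) (min |x 0 - Real.pi| |x 1 - Real.pi|) < μ}

/-!
Let `M` bound `|V|` (finite by periodicity), `σ = τ√(2d)` and `c = (M + 1)τ²`, so that a step
is `x_{k+1} = x_k + σ b η + w` with a drift `|w| ≤ c`. Answering `η` with the sign `b` that makes
`⟨x_k + w - x, b η⟩ ≤ 0`, player II ensures `|x_{k+1} - x|² ≤ (|x_k - x| + c)² + σ²`, hence the
quantity `√(|x_k - x|² + (N - k)σ²) + (N - k)c` never increases and the game ends within
`√N σ + N c ≤ (√(2d) + M + 1)√t` of `x`. Player I, playing `η = 0`, moves only by the drift, so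
the game ends within `N c` of `x`.
-/

open Metric

lemma norm_perp2 (v : En 2) : ‖perp2 v‖ = ‖v‖ := by
  simp only [EuclideanSpace.norm_eq, Fin.sum_univ_two, perp2, vec2,
    Matrix.cons_val_zero, Matrix.cons_val_one, Real.norm_eq_abs, sq_abs, neg_sq, add_comm]

lemma ZPeriodic.exists_norm_le {n : ℕ} {E : Type*} [SeminormedAddCommGroup E]
    {f : En n → E} (hf : ZPeriodic f) (hc : Continuous f) : ∃ M, ∀ x, ‖f x‖ ≤ M := by
  obtain ⟨M, hM⟩ := (isCompact_Icc (a := (0 : Fin n → ℝ)) (b := 1)).exists_bound_of_continuousOn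
    (hc.comp (PiLp.continuous_toLp 2 _)).continuousOn
  refine ⟨M, fun x => ?_⟩
  have hfract : x + (WithLp.equiv 2 (Fin n → ℝ)).symm (fun i => ((-⌊x i⌋ : ℤ) : ℝ))
      = WithLp.toLp 2 (fun i => Int.fract (x i)) := by
    ext i
    simp [Int.fract, sub_eq_add_neg]
  rw [← hf (fun i => -⌊x i⌋) x, hfract]
  exact hM _ ⟨fun i => Int.fract_nonneg _, fun i => (Int.fract_lt_one _).le⟩

lemma Real.sqrt_add_sq_add_le {r s c : ℝ} (hs : 0 ≤ s) (hc : 0 ≤ c) :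
    √((r + c) ^ 2 + s) ≤ √(r ^ 2 + s) + c := by
  have hr : r ≤ √(r ^ 2 + s) := Real.le_sqrt_of_sq_le (by linarith)
  refine Real.sqrt_le_iff.mpr ⟨by positivity, ?_⟩
  nlinarith [Real.sq_sqrt (by positivity : 0 ≤ r ^ 2 + s)]

lemma exists_sign_norm_add_smul_sq_le {E : Type*} [NormedAddCommGroup E] [InnerProductSpace ℝ E]
    (w : E) {η : E} (hη : ‖η‖ ≤ 1) (σ : ℝ) :
    ∃ b : ℝ, (b = 1 ∨ b = -1) ∧ ‖w + (σ * b) • η‖ ^ 2 ≤ ‖w‖ ^ 2 + σ ^ 2 := by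
  set b : ℝ := if 0 ≤ σ * inner ℝ w η then -1 else 1
  have hb : b = 1 ∨ b = -1 := by unfold b; split_ifs <;> simp
  have hcross : (σ * b) * inner ℝ w η ≤ 0 := by
    unfold b; split_ifs with h <;> nlinarith
  have hb2 : (σ * b) ^ 2 = σ ^ 2 := by rcases hb with h | h <;> simp [h]
  have hη2 : ‖η‖ ^ 2 ≤ 1 := pow_le_one₀ (norm_nonneg η) hη
  refine ⟨b, hb, ?_⟩
  rw [norm_add_sq_real, real_inner_smul_right, norm_smul, mul_pow, Real.norm_eq_abs, sq_abs, hb2]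
  nlinarith [sq_nonneg σ]

def gameDrift (V : En 2 → En 2) (τ : ℝ) (y η : En 2) : En 2 :=
  (τ ^ 2 * ‖η‖) • perp2 η - τ ^ 2 • V y

section Game

variable {V : En 2 → En 2} {d τ M : ℝ} {g : En 2 → ℝ}

lemma gameStep_eq_add_gameDrift (y η : En 2) (b : ℝ) :
    gameStep V d τ y η b = y + (τ * √(2 * d) * b) • η + gameDrift V τ y η := by
  simp only [gameStep, gameDrift]
  abel

lemma norm_gameDrift_le (hM : ∀ z, ‖V z‖ ≤ M) (y : En 2) {η : En 2} (hη : ‖η‖ ≤ 1) :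
    ‖gameDrift V τ y η‖ ≤ (M + 1) * τ ^ 2 := by
  calc ‖gameDrift V τ y η‖ ≤ τ ^ 2 * ‖η‖ * ‖η‖ + τ ^ 2 * ‖V y‖ := by
        refine (norm_sub_le _ _).trans_eq ?_
        rw [norm_smul, norm_smul, norm_perp2, Real.norm_of_nonneg (by positivity),
          Real.norm_of_nonneg (by positivity)]
    _ ≤ τ ^ 2 * 1 * 1 + τ ^ 2 * M := by gcongr; exact hM y
    _ = (M + 1) * τ ^ 2 := by ring

lemma norm_gameStep_sub_le (hM : ∀ z, ‖V z‖ ≤ M) (y : En 2) {η : En 2} (hη : ‖η‖ ≤ 1)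
    {b : ℝ} (hb : b = 1 ∨ b = -1) :
    ‖gameStep V d τ y η b - y‖ ≤ |τ * √(2 * d)| + (M + 1) * τ ^ 2 := by
  have hσ : ‖(τ * √(2 * d) * b) • η‖ ≤ |τ * √(2 * d)| := by
    rw [norm_smul, Real.norm_eq_abs, abs_mul]
    have hb1 : |b| = 1 := by rcases hb with rfl | rfl <;> simp
    rw [hb1, mul_one]
    exact mul_le_of_le_one_right (abs_nonneg _) hη
  rw [gameStep_eq_add_gameDrift, add_assoc, add_sub_cancel_left]
  exact (norm_add_le _ _).trans (add_le_add hσ (norm_gameDrift_le hM y hη))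

lemma le_gameValue_succ {k : ℕ} {y : En 2} {a : ℝ}
    (h : ∀ η : En 2, ‖η‖ ≤ 1 → ∃ b : ℝ, (b = 1 ∨ b = -1) ∧
      a ≤ gameValue V d τ g k (gameStep V d τ y η b)) :
    a ≤ gameValue V d τ g (k + 1) y := by
  have : Nonempty (closedBall (0 : En 2) 1) := ⟨⟨0, mem_closedBall_self zero_le_one⟩⟩
  refine le_ciInf fun ⟨η, hη⟩ => ?_
  obtain ⟨b, hb | hb, hab⟩ := h η (mem_closedBall_zero_iff.mp hη) <;> subst hb
  · exact hab.trans (le_max_left _ _)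
  · exact hab.trans (le_max_right _ _)

lemma gameValue_succ_le_of_bddBelow {k : ℕ} {y : En 2} {a : ℝ}
    (ha : ∀ η : En 2, ‖η‖ ≤ 1 → a ≤ gameValue V d τ g k (gameStep V d τ y η 1)) :
    gameValue V d τ g (k + 1) y ≤ gameValue V d τ g k (y + gameDrift V τ y 0) := by
  have hbdd : BddBelow (Set.range fun η : closedBall (0 : En 2) 1 =>
      max (gameValue V d τ g k (gameStep V d τ y η 1))
        (gameValue V d τ g k (gameStep V d τ y η (-1)))) := by
    refine ⟨a, ?_⟩
    rintro _ ⟨⟨η, hη⟩, rfl⟩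
    exact (ha η (mem_closedBall_zero_iff.mp hη)).trans (le_max_left _ _)
  refine (ciInf_le hbdd ⟨0, mem_closedBall_self zero_le_one⟩).trans_eq ?_
  simp only [gameStep_eq_add_gameDrift, smul_zero, add_zero, max_self]

lemma sInf_le_gameValue (hM : ∀ z, ‖V z‖ ≤ M) (hg : Continuous g) (x : En 2) (k : ℕ)
    (y : En 2) {ρ : ℝ}
    (hρ : √(‖y - x‖ ^ 2 + k * (τ * √(2 * d)) ^ 2) + k * ((M + 1) * τ ^ 2) ≤ ρ) :
    sInf (g '' closedBall x ρ) ≤ gameValue V d τ g k y := by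
  have hc : 0 ≤ (M + 1) * τ ^ 2 := by
    have := (norm_nonneg _).trans (hM 0)
    positivity
  induction k generalizing y with
  | zero =>
    simp only [Nat.cast_zero, zero_mul, add_zero, Real.sqrt_sq (norm_nonneg _)] at hρ
    exact csInf_le ((isCompact_closedBall x ρ).image hg).bddBelow
      (Set.mem_image_of_mem g (mem_closedBall_iff_norm.mpr hρ))
  | succ k ih =>
    refine le_gameValue_succ fun η hη => ?_
    obtain ⟨b, hb, hsq⟩ :=
      exists_sign_norm_add_smul_sq_le (y - x + gameDrift V τ y η) hη (τ * √(2 * d))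
    refine ⟨b, hb, ih _ ?_⟩
    have hstep :
        gameStep V d τ y η b - x = y - x + gameDrift V τ y η + (τ * √(2 * d) * b) • η := by
      rw [gameStep_eq_add_gameDrift]
      abel
    have hdist : ‖y - x + gameDrift V τ y η‖ ≤ ‖y - x‖ + (M + 1) * τ ^ 2 :=
      (norm_add_le _ _).trans (add_le_add le_rfl (norm_gameDrift_le hM y hη))
    have hsqrt : √(‖gameStep V d τ y η b - x‖ ^ 2 + k * (τ * √(2 * d)) ^ 2)
        ≤ √(‖y - x‖ ^ 2 + (k + 1) * (τ * √(2 * d)) ^ 2) + (M + 1) * τ ^ 2 := by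
      calc _ ≤ √((‖y - x‖ + (M + 1) * τ ^ 2) ^ 2 + (k + 1) * (τ * √(2 * d)) ^ 2) := by
            refine Real.sqrt_le_sqrt ?_
            rw [hstep]
            nlinarith [norm_nonneg (y - x + gameDrift V τ y η)]
        _ ≤ _ := Real.sqrt_add_sq_add_le (by positivity) hc
    push_cast at hρ
    linarith

lemma gameValue_le_sSup (hM : ∀ z, ‖V z‖ ≤ M) (hg : Continuous g) (x : En 2) (k : ℕ)
    (y : En 2) {ρ : ℝ} (hρ : ‖y - x‖ + k * ((M + 1) * τ ^ 2) ≤ ρ) :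
    gameValue V d τ g k y ≤ sSup (g '' closedBall x ρ) := by
  induction k generalizing y with
  | zero =>
    simp only [Nat.cast_zero, zero_mul, add_zero] at hρ
    exact le_csSup ((isCompact_closedBall x ρ).image hg).bddAbove
      (Set.mem_image_of_mem g (mem_closedBall_iff_norm.mpr hρ))
  | succ k ih =>
    set σ := τ * √(2 * d)
    -- the lower bound is needed only to make the infimum over `η` bounded below
    have hlower : ∀ η : En 2, ‖η‖ ≤ 1 → sInf (g '' closedBall y
        (√((|σ| + (M + 1) * τ ^ 2) ^ 2 + k * σ ^ 2) + k * ((M + 1) * τ ^ 2)))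
        ≤ gameValue V d τ g k (gameStep V d τ y η 1) := fun η hη => by
      refine sInf_le_gameValue hM hg y k _ (add_le_add (Real.sqrt_le_sqrt ?_) le_rfl)
      gcongr
      exact norm_gameStep_sub_le hM y hη (Or.inl rfl)
    refine (gameValue_succ_le_of_bddBelow hlower).trans (ih _ ?_)
    have hdrift := norm_gameDrift_le hM y (η := 0) (τ := τ) (by simp)
    have hdist : ‖y + gameDrift V τ y 0 - x‖ ≤ ‖y - x‖ + ‖gameDrift V τ y 0‖ := by
      rw [add_sub_right_comm]
      exact norm_add_le _ _
    push_cast at hρ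
    linarith

end Game

theorem game_value_initial_control_general
    (d : ℝ) (V : En 2 → En 2) (hVc : Continuous V) (hVper : ZPeriodic V)
    (g : En 2 → ℝ) (hg : UniformContinuous g) :
    ∃ C > 0, ∀ τ ∈ Set.Ioc (0 : ℝ) 1, ∀ N : ℕ,
      (N : ℝ) * τ ^ 2 ∈ Set.Ioc (0 : ℝ) 1 → ∀ x : En 2,
        sInf (g '' Metric.closedBall x (C * Real.sqrt ((N : ℝ) * τ ^ 2)))
            ≤ gameValue V d τ g N x ∧
        gameValue V d τ g N x
            ≤ sSup (g '' Metric.closedBall x (C * Real.sqrt ((N : ℝ) * τ ^ 2))) := by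
  obtain ⟨M, hM⟩ := hVper.exists_norm_le hVc
  have hM0 : 0 ≤ M := (norm_nonneg _).trans (hM 0)
  refine ⟨√(2 * d) + (M + 1), by positivity, ?_⟩
  rintro τ - N ⟨-, ht1⟩ x
  set t := (N : ℝ) * τ ^ 2
  have ht0 : 0 ≤ t := by positivity
  have hnoise : √(‖x - x‖ ^ 2 + N * (τ * √(2 * d)) ^ 2) = √(2 * d) * √t := by
    rw [sub_self, norm_zero, show (0 : ℝ) ^ 2 + N * (τ * √(2 * d)) ^ 2 = (√(2 * d) * √t) ^ 2 by
      rw [mul_pow (√(2 * d)), Real.sq_sqrt ht0]; ring]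
    exact Real.sqrt_sq (by positivity)
  have hdrift : N * ((M + 1) * τ ^ 2) ≤ (M + 1) * √t := by
    rw [show (N : ℝ) * ((M + 1) * τ ^ 2) = (M + 1) * t by ring]
    gcongr
    exact Real.le_sqrt_of_sq_le (by nlinarith)
  constructor
  · exact sInf_le_gameValue hM hg.continuous x N x (by rw [hnoise]; linarith)
  · exact gameValue_le_sSup hM hg.continuous x N x (by
      rw [sub_self, norm_zero]; nlinarith [Real.sqrt_nonneg (2 * d), Real.sqrt_nonneg t])

/-- Control of the game value near the initial time:
`min_{|y−x| ≤ C√t} g(y) ≤ u_τ(x, Nτ²) ≤ max_{|y−x| ≤ C√t} g(y)`. -/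
theorem game_value_initial_control
    (d : ℝ) (hd : 0 < d) (V : En 2 → En 2) (hVc : Continuous V) (hVper : ZPeriodic V)
    (g : En 2 → ℝ) (hg : UniformContinuous g) :
    ∃ C > 0, ∀ τ ∈ Set.Ioc (0 : ℝ) 1, ∀ N : ℕ,
      (N : ℝ) * τ ^ 2 ∈ Set.Ioc (0 : ℝ) 1 → ∀ x : En 2,
        sInf (g '' Metric.closedBall x (C * Real.sqrt ((N : ℝ) * τ ^ 2)))
            ≤ gameValue V d τ g N x ∧
        gameValue V d τ g N x
            ≤ sSup (g '' Metric.closedBall x (C * Real.sqrt ((N : ℝ) * τ ^ 2))) :=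
  game_value_initial_control_general d V hVc hVper g hg
end
end

section
/- Let α > 0, let Ω ⊂ ℝⁿ be a bounded open set, and let V:ℝⁿ→ℝⁿ be continuous. If u ∈ C(Ω̄) is a viscosity supersolution of the stationary equation (1 − d div(Du/|Du|))₊|Du| + V(x)·Du = α on Ω, then min_{x ∈ Ω̄} u(x) = min_{x ∈ ∂Ω} u(x). -/
noncomputable section

/-!
At a minimum point `x₀ ∈ Ω` of `u` the zero function is an admissible test function, and there
`F̄(0, 0) = 0`, so the supersolution inequality reads `V(x₀) · 0 ≥ α`, impossible for `α > 0`.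
Hence the minimum of `u` over the compact set `Ω̄` is attained on `Ω̄ ∖ Ω = ∂Ω`.
-/

theorem csInf_image_closure_eq_frontier_of_not_isMinOn {X : Type*} [TopologicalSpace X]
    {Ω : Set X} {u : X → ℝ} (hΩo : IsOpen Ω) (hK : IsCompact (closure Ω)) (hΩne : Ω.Nonempty)
    (hu : ContinuousOn u (closure Ω)) (hnot : ∀ x ∈ Ω, ¬ IsMinOn u Ω x) :
    sInf (u '' closure Ω) = sInf (u '' frontier Ω) := by
  obtain ⟨x₀, hx₀, hmin⟩ := hK.exists_isMinOn hΩne.closure hu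
  have hx₀Ω : x₀ ∉ Ω := fun hx₀Ω => hnot x₀ hx₀Ω (hmin.on_subset subset_closure)
  have hx₀f : x₀ ∈ frontier Ω := hΩo.frontier_eq ▸ ⟨hx₀, hx₀Ω⟩
  have sInf_image_eq : ∀ s, x₀ ∈ s → s ⊆ closure Ω → sInf (u '' s) = u x₀ := fun s hs hsub =>
    ((hmin.on_subset hsub).isGLB hs).csInf_eq ⟨_, Set.mem_image_of_mem u hs⟩
  rw [sInf_image_eq _ hx₀ subset_rfl, sInf_image_eq _ hx₀f frontier_subset_closure]

theorem hess_const {n : ℕ} (c : ℝ) (x : En n) : hess (fun _ => c) x = 0 := by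
  simp [hess, fderiv_fun_const]

theorem Fover_zero {n : ℕ} (d : ℝ) : Fover d (0 : En n →L[ℝ] En n →L[ℝ] ℝ) 0 = 0 := by
  rw [Fover, if_pos rfl]
  exact mul_eq_zero_of_right _ (norm_zero (E := En n →L[ℝ] En n →L[ℝ] ℝ))

theorem IsStatSupersolutionOn.nonpos_of_isMinOn {n : ℕ} {d α : ℝ} {V : En n → En n}
    {Ω : Set (En n)} {u : En n → ℝ} (hsup : IsStatSupersolutionOn d V α Ω u) {x₀ : En n}
    (hx₀ : x₀ ∈ Ω) (hmin : IsMinOn u Ω x₀) : α ≤ 0 := by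
  have h := hsup (fun _ => 0) contDiff_const x₀ hx₀ (fun x hx => by simpa using hmin hx)
  simpa [gradient_fun_const, hess_const, Fover_zero] using h

theorem minimum_value_principle_general {n : ℕ}
    (d α : ℝ) (hα : 0 < α)
    (Ω : Set (En n)) (hΩo : IsOpen Ω) (hΩb : Bornology.IsBounded Ω) (hΩne : Ω.Nonempty)
    (V : En n → En n)
    (u : En n → ℝ) (hu : ContinuousOn u (closure Ω))
    (hsup : IsStatSupersolutionOn d V α Ω u) :
    sInf (u '' closure Ω) = sInf (u '' frontier Ω) :=
  csInf_image_closure_eq_frontier_of_not_isMinOn hΩo hΩb.isCompact_closure hΩne hu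
    fun _ hx hmin => hα.not_ge (hsup.nonpos_of_isMinOn hx hmin)

/-- Minimum value principle: a continuous supersolution of the
stationary equation with `α > 0` attains its minimum over `Ω̄` on `∂Ω`. -/
theorem minimum_value_principle {n : ℕ}
    (d α : ℝ) (hd : 0 < d) (hα : 0 < α)
    (Ω : Set (En n)) (hΩo : IsOpen Ω) (hΩb : Bornology.IsBounded Ω) (hΩne : Ω.Nonempty)
    (V : En n → En n) (hVc : Continuous V)
    (u : En n → ℝ) (hu : ContinuousOn u (closure Ω))
    (hsup : IsStatSupersolutionOn d V α Ω u) :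
    sInf (u '' closure Ω) = sInf (u '' frontier Ω) :=
  minimum_value_principle_general d α hα Ω hΩo hΩb hΩne V u hu hsup
end
end

section
/- Let H(x₁,x₂) = sin x₁ sin x₂. For every x = (x₁,x₂) ∈ [0,π]×[0,π], |DH(x)| ≥ √(2(H(x) − H(x)²)). -/
noncomputable section

theorem norm_vec2 (a b : ℝ) : ‖vec2 a b‖ = √(a ^ 2 + b ^ 2) := by
  simp [EuclideanSpace.norm_eq, vec2, Fin.sum_univ_two, sq_abs]

open Real in
theorem sq_add_sq_stream_gradient (x₁ x₂ : ℝ) :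
    (cos x₁ * sin x₂) ^ 2 + (sin x₁ * cos x₂) ^ 2 =
      sin x₁ ^ 2 + sin x₂ ^ 2 - 2 * (sin x₁ * sin x₂) ^ 2 := by
  rw [mul_pow, mul_pow, cos_sq', cos_sq']
  ring

/-- Gradient lower bound for the stream function:
`|DH(x)| ≥ √(2(H(x) − H(x)²))` on `[0,π]²`, where
`DH = (cos x₁ sin x₂, sin x₁ cos x₂)`. -/
theorem stream_gradient_lower_bound :
    ∀ x₁ ∈ Set.Icc (0 : ℝ) Real.pi, ∀ x₂ ∈ Set.Icc (0 : ℝ) Real.pi,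
      Real.sqrt (2 * (Real.sin x₁ * Real.sin x₂ - (Real.sin x₁ * Real.sin x₂) ^ 2))
        ≤ ‖vec2 (Real.cos x₁ * Real.sin x₂) (Real.sin x₁ * Real.cos x₂)‖ := by
  intro x₁ _ x₂ _
  rw [norm_vec2, sq_add_sq_stream_gradient]
  apply Real.sqrt_le_sqrt
  linarith [two_mul_le_add_sq (Real.sin x₁) (Real.sin x₂)]
end
end
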